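/- Fix an integer t⋆ ≥ 0 and p ∈ (0,1). Define c(t) := ∑_{x=0}^{⌊(t−1)/(t⋆+1)⌋} C(t−1−x·t⋆, x) · p^x · (1−p)^{t−(t⋆+1)x}. Then c(t) → (1−p)/(1 + t⋆·p) as t → ∞. -/

import Mathlib

/-!
Write `k = t⋆`, `q = 1 - p` and `S(n) = ∑ₓ C(n - xk, x) pˣ q^(n - (k+1)x)`, so that `c(t) = q S(t - 1)`.
By Pascal's rule `S` satisfies the renewal recurrence `S(n+k+1) = q S(n+k) + p S(n)`, with
`S(n) = qⁿ` for `n ≤ k`.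

Any real sequence `f` with this recurrence converges when `p, q > 0`: every new term is a convex
combination of two earlier ones, so the maximum of `f` over a window of `k + 1` consecutive
indices decreases, the minimum increases, and a low value at `j` keeps all of `f(j+k+1), …,
f(j+3k+1)` below the current maximum by `p q^(2k)` times the gap, so the gap contracts.
The limit is pinned down by the invariant `f(n+k) + p ∑_{i<k} f(n+i)`, which equals `1` for `S`;
hence `S(n) → 1 / (1 + kp)`.
-/

open Finset Filter Topology

section Recurrence

variable {f : ℕ → ℝ} {k : ℕ} {p q : ℝ}

noncomputable def windowMax (f : ℕ → ℝ) (k m : ℕ) : ℝ :=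
  (range (k + 1)).sup' nonempty_range_add_one fun i => f (m + i)

lemma le_windowMax {m i : ℕ} (hi : i ≤ k) : f (m + i) ≤ windowMax f k m :=
  le_sup' (fun i => f (m + i)) (mem_range.2 (Nat.lt_succ_of_le hi))

lemma exists_eq_windowMax (m : ℕ) : ∃ i ≤ k, f (m + i) = windowMax f k m := by
  obtain ⟨i, hi, h⟩ := exists_mem_eq_sup' nonempty_range_add_one fun i => f (m + i)
  exact ⟨i, Nat.lt_succ_iff.1 (mem_range.1 hi), h.symm⟩

lemma le_of_forall_window_le (hp : 0 ≤ p) (hq : 0 ≤ q) (hpq : p + q = 1)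
    (hf : ∀ n, f (n + k + 1) = q * f (n + k) + p * f n) {b : ℝ} {m : ℕ}
    (hb : ∀ i ≤ k, f (m + i) ≤ b) (j : ℕ) : f (m + j) ≤ b := by
  induction j using Nat.strong_induction_on with
  | _ j ih =>
    by_cases hj : j ≤ k
    · exact hb j hj
    obtain ⟨i, rfl⟩ : ∃ i, j = i + k + 1 := ⟨j - k - 1, by omega⟩
    have h₁ : f (m + i + k) ≤ b := by simpa only [add_assoc] using ih (i + k) (by omega)
    have h₂ : f (m + i) ≤ b := ih i (by omega)
    rw [← add_assoc, ← add_assoc, hf]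
    calc q * f (m + i + k) + p * f (m + i) ≤ q * b + p * b := by gcongr
      _ = b := by linear_combination b * hpq

lemma apply_le_windowMax (hp : 0 ≤ p) (hq : 0 ≤ q) (hpq : p + q = 1)
    (hf : ∀ n, f (n + k + 1) = q * f (n + k) + p * f n) {m n : ℕ} (h : m ≤ n) :
    f n ≤ windowMax f k m := by
  obtain ⟨j, rfl⟩ := Nat.exists_eq_add_of_le h
  exact le_of_forall_window_le hp hq hpq hf (fun i hi => le_windowMax hi) j

lemma windowMax_antitone (hp : 0 ≤ p) (hq : 0 ≤ q) (hpq : p + q = 1)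
    (hf : ∀ n, f (n + k + 1) = q * f (n + k) + p * f n) : Antitone (windowMax f k) :=
  fun _ n h => sup'_le _ _ fun i _ => apply_le_windowMax hp hq hpq hf (h.trans (n.le_add_right i))

lemma le_sub_mul_of_forall_le (hp : 0 ≤ p) (hq : 0 ≤ q) (hpq : p + q = 1)
    (hf : ∀ n, f (n + k + 1) = q * f (n + k) + p * f n) {b : ℝ} {m j : ℕ}
    (hb : ∀ n, m ≤ n → f n ≤ b) (hj : m ≤ j) (s : ℕ) :
    f (j + k + 1 + s) ≤ b - p * q ^ s * (b - f j) := by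
  induction s with
  | zero =>
    have := hb (j + k) (by omega)
    rw [add_zero, hf]
    calc q * f (j + k) + p * f j ≤ q * b + p * f j := by gcongr
      _ = b - p * q ^ 0 * (b - f j) := by linear_combination b * hpq
  | succ s ih =>
    have := hb (j + s + 1) (by omega)
    rw [show j + k + 1 + (s + 1) = j + s + 1 + k + 1 by ring, hf,
      show j + s + 1 + k = j + k + 1 + s by ring]
    calc q * f (j + k + 1 + s) + p * f (j + s + 1)
        ≤ q * (b - p * q ^ s * (b - f j)) + p * b := by gcongr
      _ = b - p * q ^ (s + 1) * (b - f j) := by linear_combination b * hpq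

lemma windowMax_add_le (hp : 0 ≤ p) (hq : 0 ≤ q) (hpq : p + q = 1)
    (hf : ∀ n, f (n + k + 1) = q * f (n + k) + p * f n) (m : ℕ) {i : ℕ} (hi : i ≤ k) :
    windowMax f k (m + (2 * k + 1))
      ≤ windowMax f k m - p * q ^ (2 * k) * (windowMax f k m - f (m + i)) := by
  refine sup'_le _ _ fun j hj => ?_
  have hj : j ≤ k := Nat.lt_succ_iff.1 (mem_range.1 hj)
  have h := le_sub_mul_of_forall_le hp hq hpq hf (fun _ hn => apply_le_windowMax hp hq hpq hf hn)
    (Nat.le_add_right m i) (k + j - i)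
  rw [show m + i + k + 1 + (k + j - i) = m + (2 * k + 1) + j by omega] at h
  refine h.trans ?_
  have hpow : q ^ (2 * k) ≤ q ^ (k + j - i) := pow_le_pow_of_le_one hq (by linarith) (by omega)
  have := mul_le_mul_of_nonneg_right (mul_le_mul_of_nonneg_left hpow hp)
    (sub_nonneg.2 (le_windowMax (f := f) (m := m) hi))
  linarith

theorem exists_tendsto_of_recurrence (hp : 0 < p) (hq : 0 < q) (hpq : p + q = 1)
    (hf : ∀ n, f (n + k + 1) = q * f (n + k) + p * f n) : ∃ L, Tendsto f atTop (𝓝 L) := by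
  have hf' : ∀ n, -f (n + k + 1) = q * -f (n + k) + p * -f n := fun n => by rw [hf]; ring
  set M := windowMax f k
  set M' := windowMax (fun n => -f n) k
  have hM := windowMax_antitone hp.le hq.le hpq hf
  have hM' := windowMax_antitone (f := fun n => -f n) hp.le hq.le hpq hf'
  have hfM (n : ℕ) : f n ≤ M n := apply_le_windowMax hp.le hq.le hpq hf le_rfl
  have hfM' (n : ℕ) : -f n ≤ M' n :=
    apply_le_windowMax (f := fun n => -f n) hp.le hq.le hpq hf' le_rfl
  have hMM' (n : ℕ) : -M' n ≤ M n := by linarith [hfM n, hfM' n]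
  obtain ⟨L, hL⟩ : ∃ L, Tendsto M atTop (𝓝 L) :=
    ⟨_, tendsto_atTop_ciInf hM ⟨-M' 0, by
      rintro _ ⟨n, rfl⟩; linarith [hMM' n, hM' (Nat.zero_le n)]⟩⟩
  obtain ⟨L', hL'⟩ : ∃ L', Tendsto M' atTop (𝓝 L') :=
    ⟨_, tendsto_atTop_ciInf hM' ⟨-M 0, by
      rintro _ ⟨n, rfl⟩; linarith [hMM' n, hM (Nat.zero_le n)]⟩⟩
  -- the contraction step, at the point of the window where `f` is minimal
  have hcontr (m : ℕ) : M (m + (2 * k + 1)) ≤ M m - p * q ^ (2 * k) * (M m + M' m) := by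
    obtain ⟨i, hi, h⟩ := exists_eq_windowMax (f := fun n => -f n) m
    have := windowMax_add_le hp.le hq.le hpq hf m hi
    rwa [show f (m + i) = -M' m by linarith, sub_neg_eq_add] at this
  have hle : L ≤ L - p * q ^ (2 * k) * (L + L') :=
    le_of_tendsto_of_tendsto ((tendsto_add_atTop_iff_nat _).2 hL)
      (hL.sub ((hL.add hL').const_mul _)) (Eventually.of_forall hcontr)
  have hge : -L' ≤ L := le_of_tendsto_of_tendsto hL'.neg hL (Eventually.of_forall hMM')
  have hpos : 0 < p * q ^ (2 * k) := by positivity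
  have hL'L : -L' = L := by nlinarith
  exact ⟨L, tendsto_of_tendsto_of_tendsto_of_le_of_le (hL'L ▸ hL'.neg) hL
    (fun n => by linarith [hfM' n]) hfM⟩

lemma window_sum_eq (hpq : p + q = 1) (hf : ∀ n, f (n + k + 1) = q * f (n + k) + p * f n)
    (n : ℕ) : f (n + k) + p * ∑ i ∈ range k, f (n + i) = f k + p * ∑ i ∈ range k, f i := by
  induction n with
  | zero => simp
  | succ n ih =>
    have h₁ := sum_range_succ (fun i => f (n + i)) k
    have h₂ := sum_range_succ' (fun i => f (n + i)) k
    simp only [add_zero, ← add_assoc] at h₂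
    rw [← ih, add_right_comm, hf]
    simp only [add_right_comm n 1]
    linear_combination p * (h₁ - h₂) + f (n + k) * hpq

theorem tendsto_of_recurrence (hp : 0 < p) (hq : 0 < q) (hpq : p + q = 1)
    (hf : ∀ n, f (n + k + 1) = q * f (n + k) + p * f n) :
    Tendsto f atTop (𝓝 ((f k + p * ∑ i ∈ range k, f i) / (1 + k * p))) := by
  obtain ⟨L, hL⟩ := exists_tendsto_of_recurrence hp hq hpq hf
  have hW : Tendsto (fun n => f (n + k) + p * ∑ i ∈ range k, f (n + i)) atTop
      (𝓝 (L + p * ∑ _i ∈ range k, L)) :=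
    ((tendsto_add_atTop_iff_nat k).2 hL).add
      ((tendsto_finsetSum _ fun i _ => (tendsto_add_atTop_iff_nat i).2 hL).const_mul p)
  simp only [window_sum_eq hpq hf, sum_const, card_range, nsmul_eq_mul] at hW
  rw [tendsto_nhds_unique tendsto_const_nhds hW]
  convert hL using 2
  field_simp

end Recurrence

section CutoffSum

variable {k : ℕ} {p q : ℝ}

noncomputable def cutoffTerm (k : ℕ) (p q : ℝ) (n x : ℕ) : ℝ :=
  ((n - x * k).choose x : ℝ) * p ^ x * q ^ (n - (k + 1) * x)

noncomputable def cutoffSum (k : ℕ) (p q : ℝ) (n : ℕ) : ℝ :=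
  ∑ x ∈ range (n / (k + 1) + 1), cutoffTerm k p q n x

lemma cutoffTerm_zero (n : ℕ) : cutoffTerm k p q n 0 = q ^ n := by
  simp [cutoffTerm]

lemma cutoffTerm_eq_zero {n x : ℕ} (h : n < (k + 1) * x) : cutoffTerm k p q n x = 0 := by
  have hx : x ≠ 0 := by rintro rfl; simp at h
  have : (k + 1) * x = x * k + x := by ring
  rw [cutoffTerm, Nat.choose_eq_zero_of_lt (by omega), Nat.cast_zero, zero_mul, zero_mul]

lemma cutoffTerm_add {n x : ℕ} :
    cutoffTerm k p q (n + k + 1) (x + 1)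
      = q * cutoffTerm k p q (n + k) (x + 1) + p * cutoffTerm k p q n x := by
  rcases lt_or_ge n ((k + 1) * x) with h | h
  · rw [cutoffTerm_eq_zero h, cutoffTerm_eq_zero (by nlinarith), cutoffTerm_eq_zero (by nlinarith)]
    ring
  obtain ⟨r, rfl⟩ := Nat.exists_eq_add_of_le h
  have e₁ : (k + 1) * (x + 1) = (k + 1) * x + k + 1 := by ring
  have e₂ : (k + 1) * x = x * k + x := by ring
  have e₃ : (x + 1) * k = x * k + k := by ring
  simp only [cutoffTerm]
  rw [show (k + 1) * x + r + k + 1 - (x + 1) * k = x + r + 1 by omega,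
    show (k + 1) * x + r + k - (x + 1) * k = x + r by omega,
    show (k + 1) * x + r - x * k = x + r by omega,
    show (k + 1) * x + r + k + 1 - (k + 1) * (x + 1) = r by omega,
    show (k + 1) * x + r + k - (k + 1) * (x + 1) = r - 1 by omega,
    show (k + 1) * x + r - (k + 1) * x = r by omega, Nat.choose_succ_succ']
  rcases r with _ | r
  · rw [add_zero, Nat.choose_self, Nat.choose_succ_self]
    push_cast
    ring
  · push_cast
    ring

lemma cutoffSum_eq_sum_range {n N : ℕ} (hN : n / (k + 1) < N) :
    cutoffSum k p q n = ∑ x ∈ range N, cutoffTerm k p q n x := by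
  refine sum_subset (range_subset_range.2 hN) fun x _ hx => cutoffTerm_eq_zero ?_
  rw [mem_range, not_lt, Nat.succ_le_iff, Nat.div_lt_iff_lt_mul (Nat.succ_pos k)] at hx
  linarith

lemma cutoffSum_of_le {n : ℕ} (h : n ≤ k) : cutoffSum k p q n = q ^ n := by
  rw [cutoffSum, Nat.div_eq_of_lt (Nat.lt_succ_of_le h), sum_range_one, cutoffTerm_zero]

lemma cutoffSum_add (n : ℕ) :
    cutoffSum k p q (n + k + 1) = q * cutoffSum k p q (n + k) + p * cutoffSum k p q n := by
  have hdiv (m : ℕ) : m / (k + 1) ≤ m := Nat.div_le_self m (k + 1)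
  rw [cutoffSum_eq_sum_range (N := n + k + 2) (by linarith [hdiv (n + k + 1)]),
    cutoffSum_eq_sum_range (N := n + k + 2) (by linarith [hdiv (n + k)]),
    cutoffSum_eq_sum_range (N := n + k + 1) (by linarith [hdiv n]),
    sum_range_succ', sum_range_succ' _ (n + k + 1)]
  simp only [cutoffTerm_add, sum_add_distrib, ← mul_sum]
  rw [cutoffTerm_zero, cutoffTerm_zero, pow_succ]
  ring

lemma cutoffSum_window_eq_one (hpq : p + q = 1) :
    cutoffSum k p q k + p * ∑ i ∈ range k, cutoffSum k p q i = 1 := by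
  rw [cutoffSum_of_le le_rfl, sum_congr rfl fun i hi => cutoffSum_of_le (mem_range.1 hi).le,
    eq_sub_of_add_eq hpq, mul_neg_geom_sum]
  ring

theorem tendsto_cutoffSum (hp : 0 < p) (hq : 0 < q) (hpq : p + q = 1) :
    Tendsto (cutoffSum k p q) atTop (𝓝 (1 / (1 + k * p))) := by
  simpa only [cutoffSum_window_eq_one hpq] using tendsto_of_recurrence hp hq hpq cutoffSum_add

end CutoffSum

theorem stmt_6 (tstar : ℕ) (p : ℝ) (hp0 : 0 < p) (hp1 : p < 1) :
    Tendsto (fun t : ℕ =>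
        ∑ x ∈ Finset.range ((t - 1) / (tstar + 1) + 1),
          ((t - 1 - x * tstar).choose x : ℝ) * p ^ x * (1 - p) ^ (t - (tstar + 1) * x))
      atTop (nhds ((1 - p) / (1 + (tstar : ℝ) * p))) := by
  have hS := tendsto_cutoffSum (k := tstar) hp0 (sub_pos.2 hp1) (add_sub_cancel p 1)
  rw [← tendsto_add_atTop_iff_nat 1, ← mul_one_div]
  convert hS.const_mul (1 - p) using 2 with t
  rw [cutoffSum, mul_sum, Nat.add_sub_cancel]
  refine sum_congr rfl fun x hx => ?_
  have : (tstar + 1) * x ≤ t := by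
    rw [mem_range, Nat.lt_succ_iff, Nat.le_div_iff_mul_le (Nat.succ_pos _)] at hx
    linarith
  rw [cutoffTerm, Nat.sub_add_comm this, pow_succ]
  ring
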